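/- arXiv:2301.12963 — 2 statements merged into one kernel-verified Lean document; each statement's English description precedes it below -/
import Mathlib

section
/- Suppose (X, d) is a compact M-doubling metric space. Then for every ε > 0 and every k ∈ ℕ, X admits a (K, ε, kε)-Cantor decomposition with K = M^⌈2 + log₂(k+3)⌉: there is an open cover of X partitioned into K+1 subfamilies, each set of diameter < ε, and any two distinct sets in the same subfamily at distance > kε. -/
/-- The distance between two sets: the infimum of pairwise distances. -/
noncomputable def setDist {X : Type*} [MetricSpace X] (U V : Set X) : ℝ :=
  sInf (Set.image2 dist U V)

/-- A `(K, ε, δ)`-Cantor decomposition of `X`: an open cover split into `K+1`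
subfamilies, each member of diameter `< ε`, with distinct members of the same
subfamily at distance `> δ`. -/
def IsCantorDecomp {X : Type*} [MetricSpace X] (K : ℕ) (ε δ : ℝ)
    (U : Fin (K + 1) → Set (Set X)) : Prop :=
  (∀ i, ∀ u ∈ U i, IsOpen u) ∧
  (∀ x : X, ∃ i, ∃ u ∈ U i, x ∈ u) ∧
  (∀ i, ∀ u ∈ U i, Metric.diam u < ε) ∧
  (∀ i, ∀ u ∈ U i, ∀ v ∈ U i, u ≠ v → δ < setDist u v)

/-! Pick a finite set of centres that is `2r`-separated and `ρ`-dense, with `2r < ρ < ε / 2`; the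
balls of radius `ρ` about them cover `X` and have diameter `< ε`. Two centres whose balls are at
distance `≤ kε` lie within `kε + 2ρ ≤ 2^j r` of each other, and by doubling a `2r`-separated set
in a ball of radius `2^j r` has at most `M^j` points. So the graph joining such centres has degree
`≤ M^j`, and a greedy colouring with `M^j + 1` colours sorts the balls into the required families.
The choice `2^j ≥ 4(k+3)` leaves room for the constants. -/

open Metric

def IsDoubling (M : ℕ) (X : Type*) [PseudoMetricSpace X] : Prop :=
  ∀ r : ℝ, 0 < r → ∀ x : X,
    ∃ s : Finset X, s.card ≤ M ∧ closedBall x (2 * r) ⊆ ⋃ y ∈ s, closedBall y r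

theorem SimpleGraph.exists_coloring_of_card_filter_adj_le {V : Type*} (G : SimpleGraph V)
    [DecidableRel G.Adj] (K : ℕ) (S : Finset V) (hdeg : ∀ x ∈ S, (S.filter (G.Adj x)).card ≤ K) :
    ∃ c : V → Fin (K + 1), ∀ x ∈ S, ∀ y ∈ S, G.Adj x y → c x ≠ c y := by
  classical
  induction S using Finset.induction_on with
  | empty => exact ⟨fun _ => 0, by simp⟩
  | @insert a T haT ih =>
    obtain ⟨c, hc⟩ := ih fun x hx => (Finset.card_le_card
      (Finset.filter_subset_filter _ (Finset.subset_insert a T))).trans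
      (hdeg x (Finset.mem_insert_of_mem hx))
    have hfree : ∃ i : Fin (K + 1), i ∉ (T.filter (G.Adj a)).image c := by
      by_contra! h
      have hK : K + 1 ≤ (T.filter (G.Adj a)).card := by
        simpa using (Finset.card_le_card (s := Finset.univ) fun i _ => h i).trans
          Finset.card_image_le
      have := (Finset.card_le_card (Finset.filter_subset_filter _ (Finset.subset_insert a T))).trans
        (hdeg a (Finset.mem_insert_self a T))
      omega
    obtain ⟨i, hi⟩ := hfree
    have hcolor : ∀ y ∈ T, G.Adj a y → i ≠ c y := fun y hy hay h =>
      hi (h ▸ Finset.mem_image_of_mem c (Finset.mem_filter.mpr ⟨hy, hay⟩))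
    have hne : ∀ y ∈ T, y ≠ a := fun y hy h => haT (h ▸ hy)
    refine ⟨Function.update c a i, ?_⟩
    simp only [Finset.mem_insert]
    rintro x (rfl | hx) y (rfl | hy) hxy
    · exact absurd hxy G.irrefl
    · simpa [Function.update_of_ne (hne y hy)] using hcolor y hy hxy
    · simpa [Function.update_of_ne (hne x hx)] using (hcolor x hx hxy.symm).symm
    · simpa [Function.update_of_ne (hne x hx), Function.update_of_ne (hne y hy)] using
        hc x hx y hy hxy

theorem IsDoubling.card_le_pow {M : ℕ} {X : Type*} [PseudoMetricSpace X] (hX : IsDoubling M X)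
    {r : ℝ} (hr : 0 < r) (j : ℕ) (x : X) (P : Finset X)
    (hsep : (P : Set X).Pairwise fun p q => 2 * r < dist p q)
    (hP : ∀ p ∈ P, p ∈ closedBall x (2 ^ j * r)) : P.card ≤ M ^ j := by
  classical
  induction j generalizing x P with
  | zero =>
    refine Finset.card_le_one.mpr fun p hp q hq => by_contra fun hpq => ?_
    have hp' := mem_closedBall.mp (hP p hp)
    have hq' := mem_closedBall'.mp (hP q hq)
    simp only [pow_zero, one_mul] at hp' hq'
    linarith [hsep hp hq hpq, dist_triangle p x q]
  | succ j ih =>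
    obtain ⟨s, hs, hcover⟩ := hX (2 ^ j * r) (by positivity) x
    have hPs : P ⊆ s.biUnion fun y => P.filter (· ∈ closedBall y (2 ^ j * r)) := by
      intro p hp
      have : p ∈ closedBall x (2 * (2 ^ j * r)) := by rw [← mul_assoc, ← pow_succ']; exact hP p hp
      obtain ⟨y, hy, hpy⟩ := Set.mem_iUnion₂.mp (hcover this)
      exact Finset.mem_biUnion.mpr ⟨y, hy, Finset.mem_filter.mpr ⟨hp, hpy⟩⟩
    calc P.card ≤ ∑ y ∈ s, (P.filter (· ∈ closedBall y (2 ^ j * r))).card :=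
          (Finset.card_le_card hPs).trans Finset.card_biUnion_le
      _ ≤ ∑ _y ∈ s, M ^ j := Finset.sum_le_sum fun y _ =>
          ih y _ (hsep.mono (Finset.coe_subset.mpr (Finset.filter_subset _ _)))
            fun p hp => (Finset.mem_filter.mp hp).2
      _ ≤ M ^ (j + 1) := by
          rw [Finset.sum_const, smul_eq_mul, pow_succ']
          exact Nat.mul_le_mul_right _ hs

theorem Finset.exists_separated_subset_dist_le {X : Type*} [PseudoMetricSpace X] (t : Finset X)
    (s : ℝ) (hs : 0 ≤ s) :
    ∃ S ⊆ t, (S : Set X).Pairwise (fun p q => s < dist p q) ∧ ∀ y ∈ t, ∃ p ∈ S, dist y p ≤ s := by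
  classical
  set F := t.powerset.filter fun S : Finset X => (S : Set X).Pairwise (fun p q => s < dist p q)
  obtain ⟨S, hSmax⟩ := Finset.exists_maximal (s := F) ⟨∅, by simp [F]⟩
  obtain ⟨hSt, hSsep⟩ : S ⊆ t ∧ (S : Set X).Pairwise (fun p q => s < dist p q) := by
    simpa [F] using hSmax.prop
  refine ⟨S, hSt, hSsep, fun y hy => ?_⟩
  by_contra! hfar
  have hyS : y ∉ S := fun hyS => (hfar y hyS).not_ge (by simpa using hs)
  have hins : insert y S ∈ F := by
    simp only [F, Finset.mem_filter, Finset.mem_powerset, Finset.coe_insert]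
    exact ⟨Finset.insert_subset hy hSt,
      hSsep.insert fun p hp _ => ⟨hfar p hp, by rw [dist_comm]; exact hfar p hp⟩⟩
  exact hyS (hSmax.eq_of_le hins (Finset.subset_insert y S) ▸ Finset.mem_insert_self y S)

theorem exists_finset_separated_dense {X : Type*} [PseudoMetricSpace X] [CompactSpace X]
    {s ρ : ℝ} (hs : 0 ≤ s) (hsρ : s < ρ) :
    ∃ S : Finset X, (S : Set X).Pairwise (fun p q => s < dist p q) ∧
      ∀ x, ∃ p ∈ S, dist x p < ρ := by
  obtain ⟨t, -, ht, hcover⟩ :=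
    finite_cover_balls_of_compact (isCompact_univ (X := X)) (sub_pos.mpr hsρ)
  obtain ⟨S, -, hSsep, hSnet⟩ := ht.toFinset.exists_separated_subset_dist_le s hs
  refine ⟨S, hSsep, fun x => ?_⟩
  obtain ⟨y, hy, hxy⟩ := Set.mem_iUnion₂.mp (hcover (Set.mem_univ x))
  obtain ⟨p, hp, hyp⟩ := hSnet y (ht.mem_toFinset.mpr hy)
  exact ⟨p, hp, by linarith [dist_triangle x y p, mem_ball.mp hxy]⟩

theorem sub_le_setDist_ball {X : Type*} [MetricSpace X] (p q : X) {ρ₁ ρ₂ : ℝ} (hρ₁ : 0 < ρ₁)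
    (hρ₂ : 0 < ρ₂) : dist p q - (ρ₁ + ρ₂) ≤ setDist (ball p ρ₁) (ball q ρ₂) := by
  refine le_csInf ⟨dist p q, Set.mem_image2_of_mem (mem_ball_self hρ₁) (mem_ball_self hρ₂)⟩ ?_
  rintro _ ⟨a, ha, b, hb, rfl⟩
  linarith [dist_triangle4 p a b q, mem_ball'.mp ha, mem_ball.mp hb]

theorem isCantorDecomp_ball_image {X : Type*} [MetricSpace X] {K : ℕ} {ε δ ρ : ℝ} (S : Set X)
    (c : X → Fin (K + 1)) (hρ : 0 < ρ) (hρε : 2 * ρ < ε) (hdense : ∀ x, ∃ p ∈ S, dist x p < ρ)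
    (hsep : ∀ p ∈ S, ∀ q ∈ S, p ≠ q → c p = c q → δ + 2 * ρ < dist p q) :
    IsCantorDecomp K ε δ fun i => (ball · ρ) '' {p ∈ S | c p = i} := by
  refine ⟨?_, fun x => ?_, ?_, ?_⟩
  · rintro i _ ⟨p, -, rfl⟩
    exact isOpen_ball
  · obtain ⟨p, hp, hxp⟩ := hdense x
    exact ⟨c p, ball p ρ, ⟨p, ⟨hp, rfl⟩, rfl⟩, hxp⟩
  · rintro i _ ⟨p, -, rfl⟩
    exact (diam_ball hρ.le).trans_lt hρε
  · rintro i _ ⟨p, ⟨hp, rfl⟩, rfl⟩ _ ⟨q, ⟨hq, hpq⟩, rfl⟩ hne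
    have := hsep p hp q hq (by rintro rfl; exact hne rfl) hpq.symm
    linarith [sub_le_setDist_ball p q hρ hρ]

theorem IsDoubling.exists_isCantorDecomp {M : ℕ} {X : Type*} [MetricSpace X] [CompactSpace X]
    (hX : IsDoubling M X) {r ρ ε δ : ℝ} (j : ℕ) (hr : 0 < r) (hrρ : 2 * r < ρ) (hρε : 2 * ρ < ε)
    (hδ : δ + 2 * ρ ≤ 2 ^ j * r) :
    ∃ U : Fin (M ^ j + 1) → Set (Set X), IsCantorDecomp (M ^ j) ε δ U := by
  classical
  obtain ⟨S, hSsep, hSdense⟩ := exists_finset_separated_dense (X := X) (by positivity) hrρ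
  let G := SimpleGraph.fromRel fun p q : X => dist p q ≤ δ + 2 * ρ
  have hdeg : ∀ x ∈ S, (S.filter (G.Adj x)).card ≤ M ^ j := fun x _ =>
    hX.card_le_pow hr j x _ (hSsep.mono (Finset.coe_subset.mpr (Finset.filter_subset _ _)))
      fun y hy => by
        obtain ⟨-, hxy | hyx⟩ := (SimpleGraph.fromRel_adj _ _ _).mp (Finset.mem_filter.mp hy).2
        · exact mem_closedBall'.mpr (hxy.trans hδ)
        · exact mem_closedBall.mpr (hyx.trans hδ)
  obtain ⟨c, hc⟩ := G.exists_coloring_of_card_filter_adj_le (M ^ j) S hdeg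
  refine ⟨_, isCantorDecomp_ball_image S c (by linarith) hρε hSdense fun p hp q hq hpq hcpq => ?_⟩
  by_contra! hpq'
  exact hc p hp q hq ((SimpleGraph.fromRel_adj _ _ _).mpr ⟨hpq, .inl hpq'⟩) hcpq

theorem four_mul_le_two_pow_ceil_logb {x : ℝ} (hx : 0 < x) :
    4 * x ≤ 2 ^ ⌈2 + Real.logb 2 x⌉₊ := by
  calc 4 * x = (2 : ℝ) ^ (2 + Real.logb 2 x) := by
        rw [Real.rpow_add two_pos, Real.rpow_logb two_pos (by norm_num) hx]; norm_num
    _ ≤ (2 : ℝ) ^ (⌈2 + Real.logb 2 x⌉₊ : ℝ) :=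
        Real.rpow_le_rpow_of_exponent_le one_le_two (Nat.le_ceil _)
    _ = 2 ^ ⌈2 + Real.logb 2 x⌉₊ := Real.rpow_natCast _ _

/-- A compact `M`-doubling metric space admits, for every `ε > 0` and `k ∈ ℕ`, a
`(K, ε, kε)`-Cantor decomposition with `K = M^⌈2 + log₂(k+3)⌉`. -/
theorem stmt_6 {X : Type*} [MetricSpace X] [CompactSpace X] (M : ℕ)
    (hdoubling : ∀ (r : ℝ), 0 < r → ∀ x : X,
      ∃ s : Finset X, s.card ≤ M ∧
        Metric.closedBall x (2 * r) ⊆ ⋃ y ∈ s, Metric.closedBall y r) :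
    ∀ (ε : ℝ), 0 < ε → ∀ k : ℕ,
      ∃ U : Fin (M ^ (⌈2 + Real.logb 2 (k + 3)⌉₊) + 1) → Set (Set X),
        IsCantorDecomp (M ^ (⌈2 + Real.logb 2 (k + 3)⌉₊)) ε (k * ε) U := by
  intro ε hε k
  -- In units of `η = ε / (4(k+3))`: `r = (k+2)η`, `ρ = (2k+5)η`, `ε = (4k+12)η`.
  set η := ε / (4 * (k + 3)) with hη
  have hηpos : 0 < η := by positivity
  have hε : ε = (4 * k + 12) * η := by rw [hη]; field_simp; ring
  have hpow := four_mul_le_two_pow_ceil_logb (x := (k : ℝ) + 3) (by positivity)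
  refine IsDoubling.exists_isCantorDecomp hdoubling _ (r := (k + 2) * η) (ρ := (2 * k + 5) * η)
    (by positivity) (by linarith) (by linarith) ?_
  calc (k : ℝ) * ε + 2 * ((2 * k + 5) * η) ≤ 4 * (k + 3) * ((k + 2) * η) := by
        rw [hε]; nlinarith
    _ ≤ _ := by gcongr
end

section
/- Let Γ be a finitely generated group with finite symmetric generating set F containing the identity, and let (X, Γ, {D_γ}, {θ_γ}) be a free partial dynamical system (meaning θ_γ(x) = θ_λ(x) implies γ = λ). Then any (d, r, M)-cover of the Cayley graph C_F(Γ) gives rise to a (d, F^r, #B_e^M(C_F(Γ)))-cover of the partial dynamical system: a cover of X by d+1 sets each of whose F^r-components has cardinality at most the cardinality of the ball of radius M in C_F(Γ). -/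
/-!
Orbits of a partial action are the classes of the equivalence relation `x ~ θ_γ x`. Fix a base
point `x₀` in each orbit; every `x` is `θ_γ x₀` for some `γ`, unique by freeness, and calling
it `coord x` turns each orbit into a subset of `Γ` on which `coord (θ_μ x) = μ * coord x`.
Pull the cover of `Γ` back along `coord`: an `F^r`-chain in a pulled-back set maps to an
`r`-chain in the original set, so `coord y * (coord x)⁻¹ ∈ F^M` for `y` in the `F^r`-component
of `x`, and since `coord` is injective on an orbit, that component injects into `F^M`.
-/

/-- `F^r`: products of at most `r` elements of `F` (the ball of radius `r` in the
word metric, since `e ∈ F`). -/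
def wordBall {Γ : Type*} [Group Γ] (F : Finset Γ) (r : ℕ) : Set Γ :=
  {γ | ∃ l : List Γ, l.length ≤ r ∧ (∀ g ∈ l, g ∈ F) ∧ l.prod = γ}

/-- A (set-theoretic) partial action of a group `Γ` on `X`: domains `D_γ` and
maps `θ_γ : D_γ → D_{γ⁻¹}` with `D_e = X`, `θ_e = id`, each `θ_γ` a bijection
onto `D_{γ⁻¹}` with inverse `θ_{γ⁻¹}`, and `θ_γ ∘ θ_λ ⊆ θ_{γλ}`. -/
structure PartialAction (Γ X : Type*) [Group Γ] where
  dom : Γ → Set X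
  map : Γ → X → X
  dom_one : dom 1 = Set.univ
  map_one : ∀ x, map 1 x = x
  mapsTo : ∀ γ : Γ, Set.MapsTo (map γ) (dom γ) (dom γ⁻¹)
  inv : ∀ γ : Γ, ∀ x ∈ dom γ, map γ⁻¹ (map γ x) = x
  comp : ∀ (γ lam : Γ) (x : X), x ∈ dom lam → map lam x ∈ dom γ →
    x ∈ dom (γ * lam) ∧ map γ (map lam x) = map (γ * lam) x

/-- The orbit-ball `B_x^P` of a partial dynamical system. -/
def PartialAction.orbBall {Γ X : Type*} [Group Γ] (θ : PartialAction Γ X)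
    (F : Finset Γ) (P : ℕ) (x : X) : Set X :=
  {y | ∃ γ ∈ wordBall F P, x ∈ θ.dom γ ∧ θ.map γ x = y}

/-- `x` and `y` lie in the same `S`-component of `A` for the partial system `θ`. -/
def PartialAction.sameComp {Γ X : Type*} [Group Γ] (θ : PartialAction Γ X)
    (S : Set Γ) (A : Set X) (x y : X) : Prop :=
  ∃ c : List X, (∀ z ∈ c, z ∈ A) ∧
    c.Chain' (fun a b => ∃ γ ∈ S, a ∈ θ.dom γ ∧ θ.map γ a = b) ∧
    c.head? = some x ∧ c.getLast? = some y

lemma wordBall_finite {Γ : Type*} [Group Γ] (F : Finset Γ) (r : ℕ) :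
    (wordBall F r).Finite := by
  refine ((List.finite_length_le F r).image fun l => (l.map (↑)).prod).subset ?_
  rintro γ ⟨l, hlen, hF, rfl⟩
  lift l to List F using hF
  exact ⟨l, by simpa using hlen, rfl⟩

namespace PartialAction

variable {Γ X : Type*} [Group Γ] (θ : PartialAction Γ X)

def IsFree : Prop :=
  ∀ (γ lam : Γ) (x : X), x ∈ θ.dom γ → x ∈ θ.dom lam →
    θ.map γ x = θ.map lam x → γ = lam

def orbitRel : Setoid X where
  r x y := ∃ γ, x ∈ θ.dom γ ∧ θ.map γ x = y
  iseqv :=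
    { refl x := ⟨1, by simp [θ.dom_one], θ.map_one x⟩
      symm := by
        rintro x y ⟨γ, hx, rfl⟩
        exact ⟨γ⁻¹, θ.mapsTo γ hx, θ.inv γ x hx⟩
      trans := by
        rintro x y z ⟨γ, hx, rfl⟩ ⟨lam, hy, rfl⟩
        obtain ⟨hdom, hmap⟩ := θ.comp lam γ x hx hy
        exact ⟨lam * γ, hdom, hmap.symm⟩ }

noncomputable def basePoint (x : X) : X := (Quotient.mk θ.orbitRel x).out

lemma orbitRel_basePoint (x : X) : θ.orbitRel (θ.basePoint x) x := Quotient.mk_out x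

lemma basePoint_eq_of_rel {x y : X} (h : θ.orbitRel x y) : θ.basePoint x = θ.basePoint y :=
  congrArg Quotient.out (Quotient.sound h)

noncomputable def coord (x : X) : Γ := (θ.orbitRel_basePoint x).choose

lemma basePoint_mem_dom_coord (x : X) : θ.basePoint x ∈ θ.dom (θ.coord x) :=
  (θ.orbitRel_basePoint x).choose_spec.1

lemma map_coord_basePoint (x : X) : θ.map (θ.coord x) (θ.basePoint x) = x :=
  (θ.orbitRel_basePoint x).choose_spec.2

lemma eq_of_basePoint_eq_of_coord_eq {x y : X} (hb : θ.basePoint x = θ.basePoint y)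
    (hc : θ.coord x = θ.coord y) : x = y := by
  rw [← θ.map_coord_basePoint x, hb, hc, θ.map_coord_basePoint]

lemma coord_map (hfree : θ.IsFree) {γ : Γ} {x : X} (hx : x ∈ θ.dom γ) :
    θ.coord (θ.map γ x) = γ * θ.coord x := by
  have hb : θ.basePoint x = θ.basePoint (θ.map γ x) := θ.basePoint_eq_of_rel ⟨γ, hx, rfl⟩
  obtain ⟨hdom, hmap⟩ := θ.comp γ (θ.coord x) (θ.basePoint x) (θ.basePoint_mem_dom_coord x)
    (by rwa [θ.map_coord_basePoint])
  refine hfree _ _ _ (θ.basePoint_mem_dom_coord _) (hb ▸ hdom) ?_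
  rw [θ.map_coord_basePoint, ← hb, ← hmap, θ.map_coord_basePoint]

variable {θ} {S : Set Γ} {A : Set X} {x y : X}

lemma sameComp.mem_right (h : θ.sameComp S A x y) : y ∈ A := by
  obtain ⟨c, hA, -, -, hlast⟩ := h
  exact hA y (List.mem_of_getLast? hlast)

lemma sameComp.orbitRel (h : θ.sameComp S A x y) : θ.orbitRel x y := by
  obtain ⟨c, -, hchain, hhead, hlast⟩ := h
  obtain ⟨t, rfl⟩ := List.head?_eq_some_iff.mp hhead
  rw [List.getLast?_eq_some_getLast (List.cons_ne_nil x t), Option.some_inj] at hlast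
  have hsteps := List.relationReflTransGen_of_exists_isChain_cons t hchain hlast
  clear hlast
  induction hsteps with
  | refl => exact θ.orbitRel.refl' x
  | tail _ hstep ih =>
    obtain ⟨γ, -, hstep⟩ := hstep
    exact θ.orbitRel.trans' ih ⟨γ, hstep⟩

lemma sameComp.exists_chain_coord (hfree : θ.IsFree) {W : Set Γ}
    (h : θ.sameComp S (θ.coord ⁻¹' W) x y) :
    ∃ c : List Γ, (∀ z ∈ c, z ∈ W) ∧ c.IsChain (fun a b => b * a⁻¹ ∈ S) ∧
      c.head? = some (θ.coord x) ∧ c.getLast? = some (θ.coord y) := by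
  obtain ⟨c, hW, hchain, hhead, hlast⟩ := h
  refine ⟨c.map θ.coord, by simpa using hW, (List.isChain_map _).2 (hchain.imp ?_),
    by simp [hhead], by simp [hlast]⟩
  rintro a b ⟨γ, hγ, ha, rfl⟩
  simpa [θ.coord_map hfree ha] using hγ

end PartialAction

theorem stmt_9_general {Γ X : Type*} [Group Γ]
    (F : Finset Γ)
    (θ : PartialAction Γ X)
    (hfree : ∀ (γ lam : Γ) (x : X), x ∈ θ.dom γ → x ∈ θ.dom lam →
      θ.map γ x = θ.map lam x → γ = lam)
    (d r M : ℕ) (W : Fin (d + 1) → Set Γ)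
    (hWcov : ∀ g : Γ, ∃ i, g ∈ W i)
    (hWbdd : ∀ i, ∀ x ∈ W i, ∀ y ∈ W i,
      (∃ c : List Γ, (∀ z ∈ c, z ∈ W i) ∧
        c.Chain' (fun a b => b * a⁻¹ ∈ wordBall F r) ∧
        c.head? = some x ∧ c.getLast? = some y) → y * x⁻¹ ∈ wordBall F M) :
    ∃ V : Fin (d + 1) → Set X,
      (∀ x : X, ∃ i, x ∈ V i) ∧
      ∀ i, ∀ x ∈ V i,
        {y | θ.sameComp (wordBall F r) (V i) x y}.ncard ≤
          (wordBall F M).ncard := by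
  refine ⟨fun i => θ.coord ⁻¹' W i, fun x => hWcov (θ.coord x), fun i x hx => ?_⟩
  refine Set.ncard_le_ncard_of_injOn (fun y => θ.coord y * (θ.coord x)⁻¹)
    (fun y hy => hWbdd i _ hx _ hy.mem_right (hy.exists_chain_coord hfree)) ?_
    (wordBall_finite F M)
  intro y hy y' hy' hyy'
  refine θ.eq_of_basePoint_eq_of_coord_eq ?_ (mul_right_cancel hyy')
  rw [← θ.basePoint_eq_of_rel hy.orbitRel, θ.basePoint_eq_of_rel hy'.orbitRel]

/-- A `(d, r, M)`-cover of the Cayley graph `C_F(Γ)` (a cover of `Γ` by `d+1`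
sets whose `r`-components have diameter at most `M`, i.e. any two points `x, y`
of the same `r`-component satisfy `y * x⁻¹ ∈ F^M`) gives rise to a
`(d, F^r, #B_e^M(C_F(Γ)))`-cover for any free partial dynamical system: a cover
of `X` by `d+1` sets whose `F^r`-components have cardinality at most
`#(F^M)`. -/
theorem stmt_9 {Γ X : Type*} [Group Γ]
    (F : Finset Γ) (hsym : ∀ γ ∈ F, γ⁻¹ ∈ F) (he : (1 : Γ) ∈ F)
    (θ : PartialAction Γ X)
    (hfree : ∀ (γ lam : Γ) (x : X), x ∈ θ.dom γ → x ∈ θ.dom lam →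
      θ.map γ x = θ.map lam x → γ = lam)
    (d r M : ℕ) (W : Fin (d + 1) → Set Γ)
    (hWcov : ∀ g : Γ, ∃ i, g ∈ W i)
    (hWbdd : ∀ i, ∀ x ∈ W i, ∀ y ∈ W i,
      (∃ c : List Γ, (∀ z ∈ c, z ∈ W i) ∧
        c.Chain' (fun a b => b * a⁻¹ ∈ wordBall F r) ∧
        c.head? = some x ∧ c.getLast? = some y) → y * x⁻¹ ∈ wordBall F M) :
    ∃ V : Fin (d + 1) → Set X,
      (∀ x : X, ∃ i, x ∈ V i) ∧
      ∀ i, ∀ x ∈ V i,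
        {y | θ.sameComp (wordBall F r) (V i) x y}.ncard ≤
          (wordBall F M).ncard :=
  stmt_9_general F θ hfree d r M W hWcov hWbdd
end
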